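/- Let H be a separable complex Hilbert space, T a bounded linear operator on H, and M a closed subspace of H that reduces T (T(M) ⊆ M and T*(M) ⊆ M, hence also T(Mᗮ) ⊆ Mᗮ and T*(Mᗮ) ⊆ Mᗮ) and such that Tx = 0 for all x ∈ M. Then there exists a conjugation C on H making T C-normal if and only if there exists a conjugation C' on Mᗮ making the restriction of T to Mᗮ C'-normal. -/

import Mathlib

open scoped InnerProductSpace
open ContinuousLinearMap TopologicalSpace

def Conjugation {K : Type*} [NormedAddCommGroup K] [InnerProductSpace ℂ K] (C : K → K) : Prop :=
  (∀ (a : ℂ) (x y : K), C (a • x + y) = (starRingEnd ℂ) a • C x + C y) ∧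
  (∀ x, C (C x) = x) ∧
  (∀ x y : K, ⟪C x, C y⟫_ℂ = ⟪y, x⟫_ℂ)

/-- `T` is `C`-normal: `C T*T C = T T*` (pointwise). -/
def CNormal {K : Type*} [NormedAddCommGroup K] [InnerProductSpace ℂ K] [CompleteSpace K]
    (C : K → K) (T : K →L[ℂ] K) : Prop :=
  ∀ x, C (adjoint T (T (C x))) = T (adjoint T x)

/-!
Both `T` and `T*` vanish on `M`, the latter because `T* M ≤ M ≤ ker T`. If `S` and `S*` vanish
on a closed subspace `K`, a conjugation on `K` and one on `Kᗮ` making the part of `S` on `Kᗮ`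
conjugate-normal add up to a conjugation making `S` conjugate-normal; with `K = M` this is the
reverse implication. Conversely, if `S` is `C`-normal then `C` maps `N = ker S ⊓ ker S*` into
itself, hence also `Nᗮ`, where it restricts to a conjugation. Since `M ≤ N`, inside `Mᗮ` the
orthogonal complement of `N ⊓ Mᗮ` is `Nᗮ`, so adding an arbitrary conjugation on `N ⊓ Mᗮ` to
the restriction of `C` gives the required conjugation on `Mᗮ`.
-/

namespace Conjugation

variable {E : Type*} [NormedAddCommGroup E] [InnerProductSpace ℂ E] {C : E → E}

theorem map_zero (hC : Conjugation C) : C 0 = 0 := by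
  simpa using hC.1 1 0 0

theorem involutive (hC : Conjugation C) : Function.Involutive C := hC.2.1

theorem inner_map_map (hC : Conjugation C) (x y : E) : ⟪C x, C y⟫_ℂ = ⟪y, x⟫_ℂ := hC.2.2 x y

theorem eq_zero_iff (hC : Conjugation C) {x : E} : C x = 0 ↔ x = 0 := by
  rw [← hC.involutive.injective.eq_iff, hC.involutive, hC.map_zero]

theorem mem_orthogonal_of_forall_mem (hC : Conjugation C) {V : Submodule ℂ E}
    (hV : ∀ x ∈ V, C x ∈ V) {x : E} (hx : x ∈ Vᗮ) : C x ∈ Vᗮ := by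
  refine (Submodule.mem_orthogonal V (C x)).2 fun k hk => ?_
  rw [← hC.involutive k, hC.inner_map_map, Submodule.inner_left_of_mem_orthogonal (hV k hk) hx]

theorem of_semiconj {V : Type*} [NormedAddCommGroup V] [InnerProductSpace ℂ V] {J : V → V}
    (ι : V →ₗᵢ[ℂ] E) (hC : Conjugation C) (hJ : Function.Semiconj ι J C) : Conjugation J := by
  refine ⟨fun a x y => ι.injective ?_, fun x => ι.injective ?_, fun x y => ?_⟩
  · simp only [hJ.eq, LinearIsometry.map_add, LinearIsometry.map_smul, hC.1]
  · rw [hJ.eq, hJ.eq, hC.involutive]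
  · rw [← ι.inner_map_map, hJ.eq, hJ.eq, hC.inner_map_map, ι.inner_map_map]

end Conjugation

theorem exists_conjugation (K : Type*) [NormedAddCommGroup K] [InnerProductSpace ℂ K]
    [CompleteSpace K] : ∃ C : K → K, Conjugation C := by
  obtain ⟨_, b, -⟩ := exists_hilbertBasis ℂ K
  refine ⟨fun x => b.repr.symm (star (b.repr x)), ?_, ?_, ?_⟩
  · intro a x y
    simp only [map_add, LinearIsometryEquiv.map_smul, star_add, star_smul, starRingEnd_apply]
  · intro x
    simp
  · intro x y
    rw [b.repr.symm.inner_map_map, ← b.repr.inner_map_map y x, lp.inner_eq_tsum, lp.inner_eq_tsum]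
    congr 1; funext i
    simp only [lp.star_apply, RCLike.inner_apply, starRingEnd_apply, star_star]
    rw [mul_comm]

section Operators

variable {E : Type*} [NormedAddCommGroup E] [InnerProductSpace ℂ E] [CompleteSpace E]

theorem apply_mem_orthogonal_of_adjoint_eq_zero {S : E →L[ℂ] E} {V : Submodule ℂ E}
    (hS : ∀ x ∈ V, adjoint S x = 0) (x : E) : S x ∈ Vᗮ := by
  refine (Submodule.mem_orthogonal V (S x)).2 fun k hk => ?_
  rw [← adjoint_inner_left, hS k hk, inner_zero_left]

theorem coe_adjoint_apply_of_coe_apply {S : E →L[ℂ] E} {V : Submodule ℂ E} [CompleteSpace V]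
    {S' : V →L[ℂ] V} (hS' : ∀ x, (S' x : E) = S x) (hV : ∀ x ∈ V, adjoint S x ∈ V) (x : V) :
    (adjoint S' x : E) = adjoint S x := by
  have : (adjoint S).restrict hV = adjoint S' := by
    rw [eq_adjoint_iff]
    intro x y
    simp only [Submodule.coe_inner, coe_restrict_apply, adjoint_inner_left, hS']
  rw [← this, coe_restrict_apply]

theorem coe_adjoint_apply_of_eq_zero {S : E →L[ℂ] E} {V : Submodule ℂ E}
    (hS : ∀ x ∈ V, S x = 0) {S' : Vᗮ →L[ℂ] Vᗮ} (hS' : ∀ x, (S' x : E) = S x) (x : Vᗮ) :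
    (adjoint S' x : E) = adjoint S x :=
  coe_adjoint_apply_of_coe_apply hS' (fun y _ =>
    apply_mem_orthogonal_of_adjoint_eq_zero (S := adjoint S) (by simpa using hS) y) x

theorem CNormal.map_mem_ker_inf_ker_adjoint {C : E → E} {S : E →L[ℂ] E} (hC : Conjugation C)
    (hCS : CNormal C S) {x : E} (hx : x ∈ S.ker ⊓ (adjoint S).ker) :
    C x ∈ S.ker ⊓ (adjoint S).ker := by
  simp only [Submodule.mem_inf, LinearMap.mem_ker, coe_coe] at hx ⊢
  constructor
  · have : adjoint S (S (C x)) = 0 := by rw [← hC.eq_zero_iff, hCS, hx.2, map_zero]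
    simpa using (SetLike.ext_iff.1 S.ker_adjoint_comp_self (C x)).1 this
  · have : S (adjoint S (C x)) = 0 := by rw [← hCS, hC.involutive, hx.1, map_zero, hC.map_zero]
    simpa using (SetLike.ext_iff.1 S.ker_self_comp_adjoint (C x)).1 this

theorem CNormal.mem_orthogonal_ker_inf_ker_adjoint {C : E → E} {S : E →L[ℂ] E}
    (hC : Conjugation C) (hCS : CNormal C S) {x : E} (hx : x ∈ (S.ker ⊓ (adjoint S).ker)ᗮ) :
    C x ∈ (S.ker ⊓ (adjoint S).ker)ᗮ :=
  hC.mem_orthogonal_of_forall_mem (fun _ hy => hCS.map_mem_ker_inf_ker_adjoint hC hy) hx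

theorem CNormal.of_semiconj {V : Type*} [NormedAddCommGroup V] [InnerProductSpace ℂ V]
    [CompleteSpace V] {C : E → E} {S : E →L[ℂ] E} {J : V → V} {S' : V →L[ℂ] V}
    (ι : V →ₗᵢ[ℂ] E) (hCS : CNormal C S) (hJ : Function.Semiconj ι J C)
    (hS : Function.Semiconj ι S' S) (hS' : Function.Semiconj ι (adjoint S') (adjoint S)) :
    CNormal J S' := fun x => ι.injective <| by
  rw [hJ.eq, hS'.eq, hS.eq, hJ.eq, hCS, hS.eq, hS'.eq]

theorem CNormal.exists_of_semiconj {V : Type*} [NormedAddCommGroup V] [InnerProductSpace ℂ V]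
    [CompleteSpace V] {C : E → E} {S : E →L[ℂ] E} {S' : V →L[ℂ] V} (ι : V →ₗᵢ[ℂ] E)
    (hC : Conjugation C) (hCS : CNormal C S) (hι : ∀ x, ∃ y, ι y = C (ι x))
    (hS : Function.Semiconj ι S' S) (hS' : Function.Semiconj ι (adjoint S') (adjoint S)) :
    ∃ J : V → V, Conjugation J ∧ CNormal J S' := by
  choose J hJ using hι
  exact ⟨J, hC.of_semiconj ι hJ, hCS.of_semiconj ι hJ hS hS'⟩

end Operators

section OrthogonalSum

variable {E : Type*} [NormedAddCommGroup E] [InnerProductSpace ℂ E] {K : Submodule ℂ E}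

theorem inner_add_add_of_orthogonal (u u' : K) (v v' : Kᗮ) :
    ⟪(u : E) + v, (u' : E) + v'⟫_ℂ = ⟪u, u'⟫_ℂ + ⟪v, v'⟫_ℂ := by
  rw [inner_add_left, inner_add_right, inner_add_right,
    Submodule.inner_right_of_mem_orthogonal u.2 v'.2,
    Submodule.inner_left_of_mem_orthogonal u'.2 v.2]
  simp [Submodule.coe_inner]

theorem mem_orthogonal_comap_subtype_iff {M N : Submodule ℂ E} [M.HasOrthogonalProjection]
    (hMN : M ≤ N) (x : Mᗮ) : x ∈ (N.comap Mᗮ.subtype)ᗮ ↔ (x : E) ∈ Nᗮ := by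
  constructor
  · intro hx
    refine (Submodule.mem_orthogonal N _).2 fun k hk => ?_
    have hPk : M.starProjection k ∈ M := (M.orthogonalProjectionOnto k).2
    have hk' : (⟨k - M.starProjection k, M.sub_starProjection_mem_orthogonal k⟩ : Mᗮ) ∈
        N.comap Mᗮ.subtype :=
      N.sub_mem hk (hMN hPk)
    rw [← sub_add_cancel k (M.starProjection k), inner_add_left,
      Submodule.inner_right_of_mem_orthogonal hPk x.2, add_zero]
    simpa [Submodule.coe_inner] using Submodule.inner_right_of_mem_orthogonal hk' hx
  · intro hx
    refine (Submodule.mem_orthogonal _ x).2 fun w hw => ?_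
    rw [Submodule.coe_inner]
    exact Submodule.inner_right_of_mem_orthogonal hw hx

variable (K) [CompleteSpace K]

noncomputable def orthogonalSum (J₁ : K → K) (J₂ : Kᗮ → Kᗮ) (x : E) : E :=
  J₁ (K.orthogonalProjectionOnto x) + J₂ (Kᗮ.orthogonalProjectionOnto x)

variable {K}

theorem orthogonalSum_add (J₁ : K → K) (J₂ : Kᗮ → Kᗮ) (u : K) (v : Kᗮ) :
    orthogonalSum K J₁ J₂ (u + v) = J₁ u + J₂ v := by
  have hu : Kᗮ.orthogonalProjectionOnto (u : E) = 0 :=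
    Submodule.orthogonalProjectionOnto_apply_of_mem_orthogonal (K.le_orthogonal_orthogonal u.2)
  have hv : K.orthogonalProjectionOnto (v : E) = 0 :=
    Submodule.orthogonalProjectionOnto_apply_of_mem_orthogonal v.2
  simp only [orthogonalSum, map_add, hu, hv,
    Submodule.orthogonalProjectionOnto_mem_subspace_eq_self, add_zero, zero_add]

theorem orthogonalSum_coe_orthogonal {J₁ : K → K} (h₁ : Conjugation J₁) (J₂ : Kᗮ → Kᗮ)
    (v : Kᗮ) : orthogonalSum K J₁ J₂ v = J₂ v := by
  simpa [h₁.map_zero] using orthogonalSum_add J₁ J₂ 0 v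

theorem orthogonalProjection_add_orthogonalProjection_orthogonal (x : E) :
    ((K.orthogonalProjectionOnto x : K) : E) + (Kᗮ.orthogonalProjectionOnto x : Kᗮ) = x :=
  K.starProjection_add_starProjection_orthogonal x

theorem conjugation_orthogonalSum {J₁ : K → K} {J₂ : Kᗮ → Kᗮ} (h₁ : Conjugation J₁)
    (h₂ : Conjugation J₂) : Conjugation (orthogonalSum K J₁ J₂) := by
  refine ⟨fun a x y => ?_, fun x => ?_, fun x y => ?_⟩
  · simp only [orthogonalSum, map_add, map_smul, h₁.1, h₂.1]
    push_cast
    module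
  · conv_lhs => arg 4; rw [orthogonalSum]
    rw [orthogonalSum_add, h₁.involutive, h₂.involutive,
      orthogonalProjection_add_orthogonalProjection_orthogonal]
  · conv_rhs => rw [← orthogonalProjection_add_orthogonalProjection_orthogonal (K := K) x,
      ← orthogonalProjection_add_orthogonalProjection_orthogonal (K := K) y]
    rw [orthogonalSum, orthogonalSum, inner_add_add_of_orthogonal,
      inner_add_add_of_orthogonal, h₁.inner_map_map, h₂.inner_map_map]

theorem cnormal_orthogonalSum [CompleteSpace E] {J₁ : K → K} {J₂ : Kᗮ → Kᗮ}
    (h₁ : Conjugation J₁) {S : E →L[ℂ] E} (hS : ∀ x ∈ K, S x = 0)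
    (hS' : ∀ x ∈ K, adjoint S x = 0) {S₂ : Kᗮ →L[ℂ] Kᗮ} (hS₂ : ∀ x, (S₂ x : E) = S x)
    (h₂ : CNormal J₂ S₂) : CNormal (orthogonalSum K J₁ J₂) S := by
  have hadj := coe_adjoint_apply_of_eq_zero hS hS₂
  intro x
  have hSx : S (orthogonalSum K J₁ J₂ x) = S₂ (J₂ (Kᗮ.orthogonalProjectionOnto x)) := by
    rw [orthogonalSum, map_add, hS _ (J₁ _).2, zero_add, hS₂]
  rw [hSx, ← hadj, orthogonalSum_coe_orthogonal h₁, h₂, hS₂, hadj]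
  conv_rhs => rw [← orthogonalProjection_add_orthogonalProjection_orthogonal (K := K) x,
    map_add, hS' _ (K.orthogonalProjectionOnto x).2, zero_add]

end OrthogonalSum

section Reduction

variable {E : Type*} [NormedAddCommGroup E] [InnerProductSpace ℂ E] [CompleteSpace E]

theorem exists_cnormal_of_cnormal_orthogonal {S : E →L[ℂ] E} {K : Submodule ℂ E}
    [CompleteSpace K] (hS : ∀ x ∈ K, S x = 0) (hS' : ∀ x ∈ K, adjoint S x = 0)
    {J : Kᗮ → Kᗮ} (hJ : Conjugation J) {S₂ : Kᗮ →L[ℂ] Kᗮ} (hS₂ : ∀ x, (S₂ x : E) = S x)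
    (hJS : CNormal J S₂) : ∃ C : E → E, Conjugation C ∧ CNormal C S := by
  obtain ⟨J₁, hJ₁⟩ := exists_conjugation K
  exact ⟨_, conjugation_orthogonalSum hJ₁ hJ, cnormal_orthogonalSum hJ₁ hS hS' hS₂ hJS⟩

theorem CNormal.exists_cnormal_orthogonal {C : E → E} {S : E →L[ℂ] E} (hC : Conjugation C)
    (hCS : CNormal C S) {M : Submodule ℂ E} [CompleteSpace M] (hS : ∀ x ∈ M, S x = 0)
    (hS' : ∀ x ∈ M, adjoint S x = 0) :
    ∃ J : Mᗮ → Mᗮ, Conjugation J ∧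
      ∃ S₁ : Mᗮ →L[ℂ] Mᗮ, (∀ x, (S₁ x : E) = S x) ∧ CNormal J S₁ := by
  set N := S.ker ⊓ (adjoint S).ker
  have hMN : M ≤ N := fun x hx => Submodule.mem_inf.2 ⟨hS x hx, hS' x hx⟩
  let S₁ : Mᗮ →L[ℂ] Mᗮ := S.restrict fun x _ => apply_mem_orthogonal_of_adjoint_eq_zero hS' x
  have hS₁adj : ∀ x, (adjoint S₁ x : E) = adjoint S x :=
    coe_adjoint_apply_of_eq_zero hS fun _ => rfl
  let K := N.comap Mᗮ.subtype
  have : CompleteSpace K := (S.isClosed_ker.inter (adjoint S).isClosed_ker).preimage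
    continuous_subtype_val |>.completeSpace_coe
  have hK : ∀ x ∈ K, S₁ x = 0 ∧ adjoint S₁ x = 0 := fun x hx =>
    ⟨Subtype.ext (Submodule.mem_inf.1 hx).1,
      Subtype.ext ((hS₁adj x).trans (Submodule.mem_inf.1 hx).2)⟩
  let S₂ : Kᗮ →L[ℂ] Kᗮ :=
    S₁.restrict fun x _ => apply_mem_orthogonal_of_adjoint_eq_zero (fun y hy => (hK y hy).2) x
  have hS₂adj : ∀ x, (adjoint S₂ x : Mᗮ) = adjoint S₁ x :=
    coe_adjoint_apply_of_eq_zero (fun y hy => (hK y hy).1) fun _ => rfl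
  let ι : Kᗮ →ₗᵢ[ℂ] E := Mᗮ.subtypeₗᵢ.comp Kᗮ.subtypeₗᵢ
  have hι : ∀ x : Kᗮ, ∃ y : Kᗮ, ι y = C (ι x) := fun x => by
    have hx : C (ι x) ∈ Nᗮ := hCS.mem_orthogonal_ker_inf_ker_adjoint hC
      ((mem_orthogonal_comap_subtype_iff hMN x).1 x.2)
    exact ⟨⟨⟨C (ι x), Submodule.orthogonal_le hMN hx⟩,
      (mem_orthogonal_comap_subtype_iff hMN _).2 hx⟩, rfl⟩
  obtain ⟨J, hJ, hJS⟩ := hCS.exists_of_semiconj (S' := S₂) ι hC hι (fun _ => rfl)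
    fun x => by simp [ι, hS₂adj, hS₁adj]
  obtain ⟨C₁, hC₁, hC₁S⟩ := exists_cnormal_of_cnormal_orthogonal (fun x hx => (hK x hx).1)
    (fun x hx => (hK x hx).2) hJ (fun _ => rfl) hJS
  exact ⟨C₁, hC₁, S₁, fun _ => rfl, hC₁S⟩

end Reduction

theorem stmt_6_general {H : Type*} [NormedAddCommGroup H] [InnerProductSpace ℂ H] [CompleteSpace H]
    (T : H →L[ℂ] H) (M : Submodule ℂ H) (hMc : IsClosed (M : Set H))
    (hTaM : ∀ x ∈ M, adjoint T x ∈ M)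
    (hT0 : ∀ x ∈ M, T x = 0) :
    (∃ C : H → H, Conjugation C ∧ CNormal C T) ↔
      (∃ C' : ↥Mᗮ → ↥Mᗮ, Conjugation C' ∧
        ∃ T' : ↥Mᗮ →L[ℂ] ↥Mᗮ, (∀ x : ↥Mᗮ, (T' x : H) = T x) ∧ CNormal C' T') := by
  have : CompleteSpace M := hMc.completeSpace_coe
  have hTa0 : ∀ x ∈ M, adjoint T x = 0 := fun x hx => by
    simpa using (SetLike.ext_iff.1 T.ker_self_comp_adjoint x).1 (hT0 _ (hTaM x hx))
  constructor
  · rintro ⟨C, hC, hCT⟩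
    exact hCT.exists_cnormal_orthogonal hC hT0 hTa0
  · rintro ⟨C', hC', T', hT', hC'T'⟩
    exact exists_cnormal_of_cnormal_orthogonal hT0 hTa0 hC' hT' hC'T'

/-- If `M` is a closed reducing subspace for `T` on which `T` vanishes, then `T` is
conjugate normal (for some conjugation on `H`) iff the restriction of `T` to `Mᗮ` is
conjugate normal (for some conjugation on `Mᗮ`). -/
theorem stmt_6 {H : Type*} [NormedAddCommGroup H] [InnerProductSpace ℂ H] [CompleteSpace H]
    [SeparableSpace H]
    (T : H →L[ℂ] H) (M : Submodule ℂ H) (hMc : IsClosed (M : Set H))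
    (hTM : ∀ x ∈ M, T x ∈ M) (hTaM : ∀ x ∈ M, adjoint T x ∈ M)
    (hT0 : ∀ x ∈ M, T x = 0) :
    (∃ C : H → H, Conjugation C ∧ CNormal C T) ↔
      (∃ C' : ↥Mᗮ → ↥Mᗮ, Conjugation C' ∧
        ∃ T' : ↥Mᗮ →L[ℂ] ↥Mᗮ, (∀ x : ↥Mᗮ, (T' x : H) = T x) ∧ CNormal C' T') :=
  stmt_6_general T M hMc hTaM hT0
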